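/- The limit inferior as n → ∞ of β_4(T^(2)[n])/n² is at least 3/5; that is, the 4-dependent limiting density τ_4^(2) for two-dimensional toroidal kings graphs is at least 3/5. -/

import Mathlib

open Filter Topology

/-- The `d`-dimensional kings graph on `Fin (n 0) × ⋯ × Fin (n (d-1))`:
distinct vertices are adjacent iff their coordinates differ by at most 1. -/
def kingsGraph (d : ℕ) (n : Fin d → ℕ) :
    SimpleGraph (∀ i : Fin d, Fin (n i)) where
  Adj u v := u ≠ v ∧ ∀ i, |((v i : ℤ)) - (u i : ℤ)| ≤ 1
  symm := by
    constructor
    rintro u v ⟨h1, h2⟩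
    exact ⟨h1.symm, fun i => by rw [abs_sub_comm]; exact h2 i⟩
  loopless := by constructor; intro v h; exact h.1 rfl

/-- The `d`-dimensional toroidal kings graph on `ZMod (n 0) × ⋯ × ZMod (n (d-1))`:
distinct vertices are adjacent iff each coordinate difference is `-1`, `0` or `1`. -/
def torusGraph (d : ℕ) (n : Fin d → ℕ) :
    SimpleGraph (∀ i : Fin d, ZMod (n i)) where
  Adj u v := u ≠ v ∧ ∀ i, v i - u i = -1 ∨ v i - u i = 0 ∨ v i - u i = 1
  symm := by
    constructor
    rintro u v ⟨h1, h2⟩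
    refine ⟨h1.symm, fun i => ?_⟩
    rcases h2 i with h | h | h
    · right; right; rw [show u i - v i = -(v i - u i) by ring, h]; norm_num
    · right; left; rw [show u i - v i = -(v i - u i) by ring, h]; norm_num
    · left; rw [show u i - v i = -(v i - u i) by ring, h]
  loopless := by constructor; intro v h; exact h.1 rfl

/-- A set `S` of vertices is `k`-dependent if every vertex of `S`
has at most `k` neighbors in `S`. -/
def IsKDependent {V : Type*} (G : SimpleGraph V) (k : ℕ) (S : Set V) : Prop :=
  ∀ v ∈ S, (S ∩ G.neighborSet v).ncard ≤ k

/-- `betaK G k` is the maximum cardinality of a `k`-dependent set in `G`. -/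
noncomputable def betaK {V : Type*} (G : SimpleGraph V) (k : ℕ) : ℕ :=
  sSup {m | ∃ S : Set V, IsKDependent G k S ∧ S.ncard = m}

/-- A set `S` of vertices is half-dependent if every vertex `v ∈ S`
has at most `|N(v)|/2` neighbors in `S`. -/
def IsHalfDependent {V : Type*} (G : SimpleGraph V) (S : Set V) : Prop :=
  ∀ v ∈ S, 2 * (S ∩ G.neighborSet v).ncard ≤ (G.neighborSet v).ncard

/-- `halfNum G` is the maximum cardinality of a half-dependent set in `G`. -/
noncomputable def halfNum {V : Type*} (G : SimpleGraph V) : ℕ :=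
  sSup {m | ∃ S : Set V, IsHalfDependent G S ∧ S.ncard = m}

/-- A graph is vertex-transitive if any vertex can be mapped to any other
by a graph automorphism. -/
def IsVertexTransitive {V : Type*} (G : SimpleGraph V) : Prop :=
  ∀ u v : V, ∃ f : G ≃g G, f u = v

/-!
Colour the plane grid by the residue of `x + 2 y` modulo 5 and keep three of the five classes.
The eight king moves change the residue by `±1` (twice each), `±2` and `±3`, so from each of the
three kept residues exactly four moves land in a kept class: the pattern is 4-dependent of
density 3/5. In the torus of side `n`, put this pattern on a box of side `5 k < n`; the spare row
and column prevent wrap-around, so there the torus adjacency is the plain kings adjacency. Hence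
`β₄ ≥ 15 k²` with `k = ⌊(n - 1) / 5⌋`, and `15 k² / n² → 3/5`.
-/

section KDependent

variable {V W : Type*} {G : SimpleGraph V} {H : SimpleGraph W} {k : ℕ}

theorem IsKDependent.image (f : G ↪g H) {S : Set V} (hS : IsKDependent G k S) :
    IsKDependent H k (f '' S) := by
  rintro _ ⟨v, hv, rfl⟩
  have hpre : f ⁻¹' H.neighborSet (f v) = G.neighborSet v :=
    Set.ext fun _ => f.apply_mem_neighborSet_iff
  rw [← Set.image_inter_preimage, hpre, Set.ncard_image_of_injective _ f.injective]
  exact hS v hv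

theorem card_mem_upperBounds_ncard_isKDependent [Finite V] (G : SimpleGraph V) (k : ℕ) :
    Nat.card V ∈ upperBounds {m | ∃ S : Set V, IsKDependent G k S ∧ S.ncard = m} := by
  rintro _ ⟨S, -, rfl⟩
  exact Set.ncard_le_card S

theorem IsKDependent.ncard_le_betaK [Finite V] {S : Set V} (hS : IsKDependent G k S) :
    S.ncard ≤ betaK G k :=
  le_csSup ⟨_, card_mem_upperBounds_ncard_isKDependent G k⟩ ⟨S, hS, rfl⟩

theorem betaK_le_card [Finite V] (G : SimpleGraph V) (k : ℕ) : betaK G k ≤ Nat.card V :=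
  csSup_le' (card_mem_upperBounds_ncard_isKDependent G k)

end KDependent

theorem ZMod.intCast_eq_intCast_iff_of_abs_sub_lt {n : ℕ} {a b : ℤ} (h : |b - a| < n) :
    (a : ZMod n) = b ↔ a = b := by
  rw [ZMod.intCast_eq_intCast_iff_dvd_sub]
  exact ⟨fun hd => (sub_eq_zero.mp (Int.eq_zero_of_abs_lt_dvd hd h)).symm,
    fun hab => by simp [hab]⟩

theorem ZMod.natCast_sub_mem_iff_abs_sub_le_one {m n : ℕ} (hmn : m < n) {a b : ℕ}
    (ha : a < m) (hb : b < m) :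
    ((b : ZMod n) - a = -1 ∨ (b : ZMod n) - a = 0 ∨ (b : ZMod n) - a = 1) ↔
      |(b : ℤ) - a| ≤ 1 := by
  have hcast (e : ℤ) (he : |e| ≤ 1) : (b : ZMod n) - a = e ↔ (b : ℤ) - a = e := by
    rw [← ZMod.intCast_eq_intCast_iff_of_abs_sub_lt (n := n) (a := (b : ℤ) - a) (b := e)
      (by rw [abs_le] at he; rw [abs_lt]; omega)]
    push_cast
    rfl
  have hm1 := hcast (-1) (by norm_num)
  have h0 := hcast 0 (by norm_num)
  have h1 := hcast 1 (by norm_num)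
  push_cast at hm1 h0 h1
  rw [hm1, h0, h1, abs_le]
  omega

def kingsGraphEmbTorusGraph {d : ℕ} {m n : Fin d → ℕ} (hmn : ∀ i, m i < n i) :
    kingsGraph d m ↪g torusGraph d n :=
  let f : (∀ i, Fin (m i)) ↪ ∀ i, ZMod (n i) :=
    ⟨fun v i => ((v i : ℕ) : ZMod (n i)), fun u v h => funext fun i => Fin.ext <| by
      have := congrArg ZMod.val (congrFun h i)
      rwa [ZMod.val_cast_of_lt ((u i).2.trans (hmn i)),
        ZMod.val_cast_of_lt ((v i).2.trans (hmn i))] at this⟩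
  { f with
    map_rel_iff' := fun {u v} => by
      change (f u ≠ f v ∧ _) ↔ (u ≠ v ∧ _)
      rw [f.injective.ne_iff]
      exact and_congr_right fun _ => forall_congr' fun i =>
        ZMod.natCast_sub_mem_iff_abs_sub_le_one (hmn i) (u i).2 (v i).2 }

def kingOffsets : Finset (ℤ × ℤ) := (({-1, 0, 1} : Finset ℤ) ×ˢ {-1, 0, 1}).erase (0, 0)

theorem card_kingOffsets_filter {t : ℕ} (ht : t < 3) :
    (kingOffsets.filter fun e => ((t : ℤ) + e.1 + 2 * e.2) % 5 < 3).card = 4 := by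
  interval_cases t <;> decide

def stripePattern (m : ℕ) : Set (Fin 2 → Fin m) := {v | ((v 0 : ℕ) + 2 * v 1) % 5 < 3}

theorem isKDependent_stripePattern (m : ℕ) :
    IsKDependent (kingsGraph 2 fun _ => m) 4 (stripePattern m) := by
  intro v hv
  set t := ((v 0 : ℕ) + 2 * v 1) % 5
  let δ (u : Fin 2 → Fin m) : ℤ × ℤ := ((u 0 : ℤ) - v 0, (u 1 : ℤ) - v 1)
  have hδ : δ.Injective := fun u w h => by
    simp only [δ, Prod.mk.injEq, sub_left_inj, Nat.cast_inj, Fin.val_inj] at h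
    ext i; fin_cases i <;> simp [h.1, h.2]
  have hmaps : δ '' (stripePattern m ∩ (kingsGraph 2 fun _ => m).neighborSet v) ⊆
      ↑(kingOffsets.filter fun e => ((t : ℤ) + e.1 + 2 * e.2) % 5 < 3) := by
    rintro _ ⟨u, ⟨hu, hne, hclose⟩, rfl⟩
    have h0 := abs_le.mp (hclose 0)
    have h1 := abs_le.mp (hclose 1)
    have hmove : (u 0 : ℤ) - v 0 ≠ 0 ∨ (u 1 : ℤ) - v 1 ≠ 0 := by
      by_contra! h
      refine hne (funext fun i => ?_)
      fin_cases i <;> simp only [Fin.zero_eta, Fin.mk_one, Fin.isValue] <;> omega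
    simp only [stripePattern, Set.mem_ofPred_eq] at hu hv
    simp only [kingOffsets, δ, Finset.coe_filter, Finset.mem_erase, Finset.mem_product,
      Finset.mem_insert, Finset.mem_singleton, Set.mem_ofPred_eq, ne_eq, Prod.mk.injEq]
    omega
  calc _ = (δ '' (stripePattern m ∩ (kingsGraph 2 fun _ => m).neighborSet v)).ncard :=
        (Set.ncard_image_of_injective _ hδ).symm
    _ ≤ (kingOffsets.filter _).card :=
        (Set.ncard_le_ncard hmaps (Finset.finite_toSet _)).trans (Set.ncard_coe_finset _).le
    _ = 4 := card_kingOffsets_filter hv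

theorem mul_sq_le_ncard_stripePattern (k : ℕ) : 15 * k ^ 2 ≤ (stripePattern (5 * k)).ncard := by
  -- `(y, r, q)` is the point of row `y` in column block `q` whose residue `x + 2 y` is `r` mod 5.
  let ψ (p : Fin (5 * k) × Fin 3 × Fin k) : stripePattern (5 * k) :=
    ⟨![⟨5 * p.2.2 + (p.2.1 + 3 * p.1) % 5, by omega⟩, p.1], by
      simp only [stripePattern, Set.mem_ofPred_eq, Matrix.cons_val_zero, Matrix.cons_val_one]
      omega⟩
  have hψ : ψ.Injective := by
    rintro ⟨y, r, q⟩ ⟨y', r', q'⟩ h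
    have h0 := congrArg Fin.val (congrFun (congrArg Subtype.val h) 0)
    have h1 := congrArg Fin.val (congrFun (congrArg Subtype.val h) 1)
    simp only [ψ, Matrix.cons_val_zero, Matrix.cons_val_one] at h0 h1
    have hr := r.2
    have hr' := r'.2
    simp only [Prod.mk.injEq, Fin.ext_iff]
    omega
  calc 15 * k ^ 2 = Nat.card (Fin (5 * k) × Fin 3 × Fin k) := by
        rw [Nat.card_eq_fintype_card, Fintype.card_prod, Fintype.card_prod]
        simp only [Fintype.card_fin]
        ring
    _ ≤ _ := Nat.card_le_card_of_injective ψ hψ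

theorem mul_sq_le_betaK_torusGraph {n k : ℕ} (hk : 5 * k < n) :
    15 * k ^ 2 ≤ betaK (torusGraph 2 fun _ => n) 4 := by
  have : NeZero n := ⟨by omega⟩
  let f := kingsGraphEmbTorusGraph (d := 2) (m := fun _ => 5 * k) (n := fun _ => n) fun _ => hk
  calc 15 * k ^ 2 ≤ (stripePattern (5 * k)).ncard := mul_sq_le_ncard_stripePattern k
    _ = (f '' stripePattern (5 * k)).ncard := (Set.ncard_image_of_injective _ f.injective).symm
    _ ≤ _ := ((isKDependent_stripePattern _).image f).ncard_le_betaK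

theorem betaK_torusGraph_le_pow (d n k : ℕ) [NeZero n] :
    betaK (torusGraph d fun _ => n) k ≤ n ^ d := by
  simpa using betaK_le_card (torusGraph d fun _ => n) k

theorem sub_five_sq_le_betaK_torusGraph {n : ℕ} (hn : 5 ≤ n) :
    3 / 5 * ((n : ℝ) - 5) ^ 2 ≤ betaK (torusGraph 2 fun _ => n) 4 := by
  have hk : (n : ℝ) - 5 ≤ 5 * ((n - 1) / 5 : ℕ) := by
    have : n ≤ 5 * ((n - 1) / 5) + 5 := by omega
    have : (n : ℝ) ≤ 5 * ((n - 1) / 5 : ℕ) + 5 := by exact_mod_cast this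
    linarith
  have hn5 : (5 : ℝ) ≤ n := by exact_mod_cast hn
  calc 3 / 5 * ((n : ℝ) - 5) ^ 2 ≤ 3 / 5 * (5 * ((n - 1) / 5 : ℕ)) ^ 2 := by gcongr
    _ = ((15 * ((n - 1) / 5) ^ 2 : ℕ) : ℝ) := by push_cast; ring
    _ ≤ _ := by exact_mod_cast mul_sq_le_betaK_torusGraph (by omega)

/-- τ_4^(2) ≥ 3/5. -/
theorem stmt_5 :
    (3 : ℝ)/5 ≤ Filter.liminf
      (fun n : ℕ => (betaK (torusGraph 2 (fun _ => n)) 4 : ℝ) / (n : ℝ) ^ 2)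
      Filter.atTop := by
  have hg : Tendsto (fun n : ℕ => 3 / 5 * (1 - 5 / (n : ℝ)) ^ 2) atTop (𝓝 (3 / 5)) := by
    simpa using
      (((tendsto_const_div_atTop_nhds_zero_nat 5).const_sub 1).pow 2).const_mul (3 / 5 : ℝ)
  have hlower : ∀ᶠ n : ℕ in atTop, 3 / 5 * (1 - 5 / (n : ℝ)) ^ 2 ≤
      (betaK (torusGraph 2 fun _ => n) 4 : ℝ) / (n : ℝ) ^ 2 := by
    filter_upwards [eventually_ge_atTop 5] with n hn
    have hn0 : (n : ℝ) ≠ 0 := by positivity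
    rw [show 3 / 5 * (1 - 5 / (n : ℝ)) ^ 2 = 3 / 5 * (n - 5) ^ 2 / (n : ℝ) ^ 2 by field_simp]
    gcongr
    exact sub_five_sq_le_betaK_torusGraph hn
  have hupper :
      ∀ᶠ n : ℕ in atTop, (betaK (torusGraph 2 fun _ => n) 4 : ℝ) / (n : ℝ) ^ 2 ≤ 1 := by
    filter_upwards [eventually_ge_atTop 1] with n hn
    have : NeZero n := ⟨by omega⟩
    rw [div_le_one (by positivity)]
    exact_mod_cast betaK_torusGraph_le_pow 2 n 4
  calc (3 : ℝ) / 5 = liminf (fun n : ℕ => 3 / 5 * (1 - 5 / (n : ℝ)) ^ 2) atTop :=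
        hg.liminf_eq.symm
    _ ≤ _ := liminf_le_liminf hlower hg.isBoundedUnder_ge
      (isCoboundedUnder_ge_of_eventually_le atTop hupper)
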